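/- For every m ∈ ℤ^p \ {0}, viewing m as a vector of ℂ^p and writing m = m_- + m_+ with m_- = Π_-(m) ∈ E_- and m_+ = Π_+(m) ∈ E_+, one has m_- ≠ 0 and m_+ ≠ 0; equivalently, no nonzero integer vector lies in the stable subspace E_- or in the unstable subspace E_+. -/

import Mathlib

/-- The stable subspace of an endomorphism: the sum of the generalized eigenspaces
for eigenvalues of modulus `< 1`. -/
noncomputable def stableSubspace {M : Type*} [AddCommGroup M] [Module ℂ M]
    (f : Module.End ℂ M) : Submodule ℂ M :=
  ⨆ (μ : ℂ) (_ : ‖μ‖ < 1), f.maxGenEigenspace μ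

/-- The unstable subspace of an endomorphism: the sum of the generalized eigenspaces
for eigenvalues of modulus `> 1`. -/
noncomputable def unstableSubspace {M : Type*} [AddCommGroup M] [Module ℂ M]
    (f : Module.End ℂ M) : Submodule ℂ M :=
  ⨆ (μ : ℂ) (_ : 1 < ‖μ‖), f.maxGenEigenspace μ

/-!
On a generalized eigenspace for `μ`, the binomial expansion of `(N + μ)ⁿ` with `N` nilpotent
shows that the forward orbit of a vector tends to `0` when `‖μ‖ < 1`; hence so does the orbit of
every stable vector. But if `C` is an integer matrix with `det C ≠ 0`, the orbit `Cⁿ m` of a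
nonzero integer vector `m` consists of nonzero integer vectors, of sup norm at least `1`. This
rules out `m ∈ E₋(B)`; and since `det B = ±1`, `B⁻¹` is again an integer matrix, whose stable
subspace contains `E₊(B)` (generalized eigenvectors of `B` for `μ` are generalized eigenvectors
of `B⁻¹` for `μ⁻¹`).
-/

open Filter Topology Finset Matrix

theorem tendsto_choose_mul_pow_sub {R : Type*} [NormedRing R] [HasSummableGeomSeries R]
    (k : ℕ) {r : R} (hr : ‖r‖ < 1) :
    Tendsto (fun n : ℕ => (n.choose k : R) * r ^ (n - k)) atTop (𝓝 0) := by
  rw [← tendsto_add_atTop_iff_nat k]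
  simpa using (summable_choose_mul_geometric_of_norm_lt_one k hr).tendsto_atTop_zero

namespace Module.End

section Algebraic

variable {M : Type*} [AddCommGroup M]

theorem pow_apply_eq_sum_of_pow_sub_smul_apply_eq_zero {R : Type*} [CommRing R] [Module R M]
    (f : End R M) (μ : R) {v : M} {K : ℕ} (hK : ((f - μ • 1) ^ K) v = 0) {n : ℕ}
    (hn : K ≤ n + 1) :
    (f ^ n) v = ∑ k ∈ range K, ((n.choose k : R) * μ ^ (n - k)) • ((f - μ • 1) ^ k) v := by
  have hcomm : Commute (f - μ • 1) (μ • 1) := (Commute.one_right _).smul_right μ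
  have hterm : ∀ k, ((f - μ • 1) ^ k * (μ • 1) ^ (n - k) * (n.choose k : End R M)) v =
      ((n.choose k : R) * μ ^ (n - k)) • ((f - μ • 1) ^ k) v := by
    intro k
    simp only [smul_pow, one_pow, mul_apply, natCast_apply, LinearMap.smul_apply, one_apply,
      map_smul, map_nsmul]
    rw [mul_smul, Nat.cast_smul_eq_nsmul, smul_comm]
  rw [← sub_add_cancel f (μ • 1), hcomm.add_pow, sub_add_cancel, LinearMap.coe_sum,
    Finset.sum_apply]
  simp only [hterm]
  refine (Finset.sum_subset (range_subset_range.mpr hn) fun k _ hk => ?_).symm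
  rw [mem_range, not_lt] at hk
  rw [← Nat.sub_add_cancel hk, pow_add, mul_apply, hK, map_zero, smul_zero]

theorem maxGenEigenspace_le_maxGenEigenspace_inv {K : Type*} [Field K] [Module K M]
    {f g : End K M} (hfg : f * g = 1) (hgf : g * f = 1) {μ : K} (hμ : μ ≠ 0) :
    f.maxGenEigenspace μ ≤ g.maxGenEigenspace μ⁻¹ := by
  intro v hv
  obtain ⟨k, hk⟩ := (mem_maxGenEigenspace f μ v).mp hv
  refine (mem_maxGenEigenspace g μ⁻¹ v).mpr ⟨k, ?_⟩
  have hsub : g - μ⁻¹ • 1 = (-μ⁻¹) • (g * (f - μ • 1)) := by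
    rw [mul_sub, hgf, mul_smul_comm, mul_one, smul_sub, smul_smul, neg_mul, inv_mul_cancel₀ hμ]
    module
  have hcomm : Commute g (f - μ • 1) :=
    Commute.sub_right (hgf.trans hfg.symm) ((Commute.one_right g).smul_right μ)
  rw [hsub, smul_pow, hcomm.mul_pow, LinearMap.smul_apply, mul_apply, hk, map_zero, smul_zero]

theorem unstableSubspace_le_stableSubspace_of_mul_eq_one [Module ℂ M] {f g : End ℂ M}
    (hfg : f * g = 1) (hgf : g * f = 1) : unstableSubspace f ≤ stableSubspace g := by
  refine iSup₂_le fun μ hμ => (maxGenEigenspace_le_maxGenEigenspace_inv hfg hgf ?_).trans ?_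
  · exact norm_pos_iff.mp (one_pos.trans hμ)
  · exact le_iSup₂ (f := fun (ν : ℂ) (_ : ‖ν‖ < 1) => g.maxGenEigenspace ν) μ⁻¹
      (by rw [norm_inv]; exact inv_lt_one_of_one_lt₀ hμ)

end Algebraic

section Normed

variable {E : Type*} [NormedAddCommGroup E] [NormedSpace ℂ E]

theorem tendsto_pow_apply_of_mem_maxGenEigenspace (f : End ℂ E) {μ : ℂ} (hμ : ‖μ‖ < 1) {v : E}
    (hv : v ∈ f.maxGenEigenspace μ) :
    Tendsto (fun n => (f ^ n) v) atTop (𝓝 0) := by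
  obtain ⟨K, hK⟩ := (mem_maxGenEigenspace f μ v).mp hv
  have hsum : Tendsto (fun n : ℕ =>
      ∑ k ∈ range K, ((n.choose k : ℂ) * μ ^ (n - k)) • ((f - μ • 1) ^ k) v) atTop (𝓝 0) := by
    simpa using tendsto_finsetSum (range K) fun k _ =>
      (tendsto_choose_mul_pow_sub k hμ).smul_const (((f - μ • 1) ^ k) v)
  refine hsum.congr' ?_
  filter_upwards [eventually_ge_atTop K] with n hn
  exact (pow_apply_eq_sum_of_pow_sub_smul_apply_eq_zero f μ hK (by omega)).symm

def attractingSubspace (f : End ℂ E) : Submodule ℂ E where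
  carrier := {v | Tendsto (fun n => (f ^ n) v) atTop (𝓝 0)}
  zero_mem' := by simp
  add_mem' hv hw := by simpa using hv.add hw
  smul_mem' c _ hv := by simpa using hv.const_smul c

theorem stableSubspace_le_attractingSubspace (f : End ℂ E) :
    stableSubspace f ≤ f.attractingSubspace :=
  iSup₂_le fun _ hμ _ hv => tendsto_pow_apply_of_mem_maxGenEigenspace f hμ hv

end Normed

end Module.End

theorem one_le_norm_intCast_of_ne_zero {ι : Type*} [Fintype ι] {m : ι → ℤ} (hm : m ≠ 0) :
    1 ≤ ‖fun i => (m i : ℂ)‖ := by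
  obtain ⟨i, hi⟩ := Function.ne_iff.mp hm
  calc (1 : ℝ) ≤ ‖(m i : ℂ)‖ := by rw [Complex.norm_intCast]; exact_mod_cast Int.one_le_abs hi
    _ ≤ ‖fun i => (m i : ℂ)‖ := norm_le_pi_norm (fun i => (m i : ℂ)) i

namespace Matrix

variable {ι : Type*} [Fintype ι] [DecidableEq ι]

theorem toLin'_map_intCast_pow_apply (C : Matrix ι ι ℤ) (m : ι → ℤ) (n : ℕ) :
    (toLin' (C.map (Int.cast : ℤ → ℂ)) ^ n) (fun i => (m i : ℂ)) =
      fun i => ((C ^ n *ᵥ m) i : ℂ) := by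
  have hpow : C.map (Int.cast : ℤ → ℂ) ^ n = (C ^ n).map Int.cast :=
    (C.map_pow (Int.castRingHom ℂ) n).symm
  rw [← toLin'_pow, hpow, toLin'_apply]
  ext i
  exact (RingHom.map_mulVec (Int.castRingHom ℂ) _ _ i).symm

theorem toLin'_map_intCast_mul_eq_one {A C : Matrix ι ι ℤ} (h : A * C = 1) :
    toLin' (A.map (Int.cast : ℤ → ℂ)) * toLin' (C.map (Int.cast : ℤ → ℂ)) = 1 := by
  have hmul : A.map (Int.cast : ℤ → ℂ) * C.map Int.cast = (A * C).map Int.cast :=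
    (Matrix.map_mul (f := Int.castRingHom ℂ)).symm
  rw [Module.End.mul_eq_comp, ← toLin'_mul, hmul, h]
  simp [Module.End.one_eq_id]

theorem intCast_notMem_stableSubspace {C : Matrix ι ι ℤ} (hC : C.det ≠ 0) {m : ι → ℤ}
    (hm : m ≠ 0) :
    (fun i => (m i : ℂ)) ∉ stableSubspace (toLin' (C.map (Int.cast : ℤ → ℂ))) := by
  intro hmem
  have hnorm := (Module.End.stableSubspace_le_attractingSubspace _ hmem).norm
  obtain ⟨n, hn⟩ := (hnorm.eventually (gt_mem_nhds (norm_zero.trans_lt one_pos))).exists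
  have horbit_ne : C ^ n *ᵥ m ≠ 0 := fun h =>
    hm (eq_zero_of_mulVec_eq_zero (by rw [det_pow]; exact pow_ne_zero n hC) h)
  rw [toLin'_map_intCast_pow_apply] at hn
  exact (one_le_norm_intCast_of_ne_zero horbit_ne).not_gt hn

end Matrix

theorem integer_vector_not_in_stable_unstable_general
    (p : ℕ)
    (B : Matrix (Fin p) (Fin p) ℤ) (hB : B.det = 1 ∨ B.det = -1)
    (m : Fin p → ℤ) (hm : m ≠ 0) :
    (fun i => (m i : ℂ)) ∉ stableSubspace (Matrix.toLin' (B.map (Int.cast : ℤ → ℂ))) ∧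
    (fun i => (m i : ℂ)) ∉ unstableSubspace (Matrix.toLin' (B.map (Int.cast : ℤ → ℂ))) := by
  have hdet : IsUnit B.det := Int.isUnit_iff.mpr hB
  refine ⟨intCast_notMem_stableSubspace hdet.ne_zero hm, fun h => ?_⟩
  refine intCast_notMem_stableSubspace (isUnit_nonsing_inv_det B hdet).ne_zero hm ?_
  exact Module.End.unstableSubspace_le_stableSubspace_of_mul_eq_one
    (toLin'_map_intCast_mul_eq_one (mul_nonsing_inv B hdet))
    (toLin'_map_intCast_mul_eq_one (nonsing_inv_mul B hdet)) h

/-- For a hyperbolic `B ∈ GL(p,ℤ)`, no nonzero integer vector lies in the stable subspace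
`E₋` or in the unstable subspace `E₊` of `B` acting on `ℂ^p`; equivalently, both components
`m₋, m₊` of any `m ∈ ℤ^p \ {0}` in the decomposition `ℂ^p = E₋ ⊕ E₊` are nonzero. -/
theorem integer_vector_not_in_stable_unstable
    (p : ℕ) (hp : 1 ≤ p)
    (B : Matrix (Fin p) (Fin p) ℤ) (hB : B.det = 1 ∨ B.det = -1)
    (hhyp : ∀ μ ∈ spectrum ℂ (B.map (Int.cast : ℤ → ℂ)), ‖μ‖ ≠ 1)
    (m : Fin p → ℤ) (hm : m ≠ 0) :
    (fun i => (m i : ℂ)) ∉ stableSubspace (Matrix.toLin' (B.map (Int.cast : ℤ → ℂ))) ∧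
    (fun i => (m i : ℂ)) ∉ unstableSubspace (Matrix.toLin' (B.map (Int.cast : ℤ → ℂ))) :=
  integer_vector_not_in_stable_unstable_general p B hB m hm
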